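/- For the Lie algebra gl_N acting diagonally by the adjoint action on S(gl_N)^{⊗p}, every necklace element x_μ is invariant: for every X ∈ gl_N, X · x_μ = 0. -/

import Mathlib

/-!
Arrange the generators of tensor slot `s` into the generic matrix `M_s = (e_{kl} ⊗ slot s)`.
Then `x_μ` is the trace of the product `M_{c₁} ⋯ M_{c_n}`. Since `[Y, e_{kl}]` has entries
`Y_{ak} δ_{bl} - δ_{ak} Y_{lb}`, the derivation `ad Y` acts entrywise on each `M_s` as the
commutator with `Yᵀ`, hence, by the Leibniz rule, on the whole product as well; and the trace of
a commutator vanishes.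
-/

open MvPolynomial

/-- Matrix unit `e_{ij}` in `gl_N`. -/
noncomputable def glE (F : Type) [Field F] (N : ℕ) (i j : Fin N) :
    Matrix (Fin N) (Fin N) F := Matrix.single i j 1

/-- The necklace element `x_μ` of a `p`-colored necklace `μ` of order `n`, as an element of
`S(gl_N)^{⊗p}`, where the latter is modelled as the polynomial algebra on `p` copies of the
basis `e_{ij}` of `gl_N`: variable `(s, i, j)` is the generator `e_{ij}` in tensor slot `s`. -/
noncomputable def neck (F : Type) [Field F] (p N n : ℕ) (hn : 0 < n) (μ : ℕ → Fin p) :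
    MvPolynomial (Fin p × Fin N × Fin N) F :=
  ∑ i : Fin n → Fin N, ∏ m : Fin n,
    X (μ m.val, i m, i ⟨(m.val + 1) % n, Nat.mod_lt _ hn⟩)

/-- The diagonal adjoint action of `X ∈ gl_N` on `S(gl_N)^{⊗p}`, given by the derivation
extending `ad X` in every tensor slot: the generator `e_{ij}` in slot `s` is sent to the
element of slot `s` corresponding to `[X, e_{ij}] ∈ gl_N`. -/
noncomputable def adDer (F : Type) [Field F] (p N : ℕ) (Y : Matrix (Fin N) (Fin N) F) :
    Derivation F (MvPolynomial (Fin p × Fin N × Fin N) F)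
      (MvPolynomial (Fin p × Fin N × Fin N) F) :=
  MvPolynomial.mkDerivation F fun q =>
    ∑ a : Fin N, ∑ b : Fin N, (⁅Y, glE F N q.2.1 q.2.2⁆ a b) • X (q.1, a, b)

namespace Matrix

variable {ι A : Type*} [Fintype ι] [DecidableEq ι] [CommSemiring A]

theorem list_ofFn_prod_apply {n : ℕ} (f : Fin (n + 1) → Matrix ι ι A) (k l : ι) :
    (List.ofFn f).prod k l =
      ∑ i : Fin n → ι,
        ∏ m, f m ((Fin.cons k i : Fin (n + 1) → ι) m) ((Fin.snoc i l : Fin (n + 1) → ι) m) := by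
  induction n generalizing k with
  | zero => simp [Fin.snoc]
  | succ n ih =>
    rw [List.ofFn_succ, List.prod_cons, mul_apply,
      ← Fintype.sum_equiv (Fin.consEquiv fun _ => ι) _ _ (fun _ => rfl),
      Fintype.sum_prod_type]
    refine Finset.sum_congr rfl fun j _ => ?_
    simp only [ih, Finset.mul_sum, Fin.prod_univ_succ (n := n + 1)]
    refine Finset.sum_congr rfl fun i _ => ?_
    simp [Fin.consEquiv, ← Fin.cons_snoc_eq_snoc_cons]

theorem trace_list_ofFn_prod {n : ℕ} (f : Fin (n + 1) → Matrix ι ι A) :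
    (List.ofFn f).prod.trace = ∑ i : Fin (n + 1) → ι, ∏ m, f m (i m) (i (m + 1)) := by
  have snoc_eq_cons_add_one (k : ι) (i : Fin n → ι) (m : Fin (n + 1)) :
      (Fin.snoc i k : Fin (n + 1) → ι) m = (Fin.cons k i : Fin (n + 1) → ι) (m + 1) := by
    induction m using Fin.lastCases with
    | last => simp
    | cast j => simp [Fin.coeSucc_eq_succ]
  rw [← Fintype.sum_equiv (Fin.consEquiv fun _ => ι) _ _ (fun _ => rfl), Fintype.sum_prod_type]
  simp only [trace, diag, list_ofFn_prod_apply, snoc_eq_cons_add_one]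
  rfl

end Matrix

namespace Derivation

variable {R A ι : Type*} [CommSemiring R] [CommRing A] [Algebra R A] [Fintype ι]
  (D : Derivation R A A)

theorem map_matrix_mul (M P : Matrix ι ι A) :
    (M * P).map D = M.map D * P + M * P.map D := by
  ext k l
  simp only [Matrix.map_apply, Matrix.mul_apply, Matrix.add_apply, map_sum, leibniz, smul_eq_mul,
    ← Finset.sum_add_distrib]
  exact Finset.sum_congr rfl fun j _ => by ring

variable [DecidableEq ι]

theorem map_list_prod_eq_lie {Z : Matrix ι ι A} {L : List (Matrix ι ι A)}
    (hL : ∀ M ∈ L, M.map D = Z * M - M * Z) : L.prod.map D = Z * L.prod - L.prod * Z := by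
  induction L with
  | nil => ext k l; simp [Matrix.one_apply, apply_ite]
  | cons M L ih =>
    rw [List.prod_cons, map_matrix_mul, hL M List.mem_cons_self,
      ih fun P hP => hL P (List.mem_cons_of_mem M hP)]
    noncomm_ring

theorem apply_trace_list_prod_eq_zero {Z : Matrix ι ι A} {L : List (Matrix ι ι A)}
    (hL : ∀ M ∈ L, M.map D = Z * M - M * Z) : D L.prod.trace = 0 := by
  have map_trace : D L.prod.trace = (L.prod.map D).trace := map_sum D _ _
  rw [map_trace, map_list_prod_eq_lie D hL, Matrix.trace_sub, Matrix.trace_mul_comm, sub_self]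

end Derivation

open scoped Matrix

variable {F : Type} [Field F] {p N : ℕ}

theorem lie_glE_apply (Y : Matrix (Fin N) (Fin N) F) (k l a b : Fin N) :
    ⁅Y, glE F N k l⁆ a b = (if b = l then Y a k else 0) - (if a = k then Y l b else 0) := by
  by_cases ha : a = k <;> by_cases hb : b = l <;>
    simp [glE, Ring.lie_def, ha, hb, Matrix.mul_single_apply_of_ne, Matrix.single_mul_apply_of_ne]

theorem adDer_X (Y : Matrix (Fin N) (Fin N) F) (s : Fin p) (k l : Fin N) :
    adDer F p N Y (X (s, k, l)) =
      ∑ a, C (Y a k) * X (s, a, l) - ∑ b, X (s, k, b) * C (Y l b) := by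
  simp only [adDer, mkDerivation_X, lie_glE_apply, sub_smul, ite_smul, zero_smul,
    Finset.sum_sub_distrib, Finset.sum_ite_eq', Finset.mem_univ, if_true, smul_eq_C_mul]
  rw [Finset.sum_comm]
  simp [mul_comm]

noncomputable def slotMatrix {R : Type*} [CommSemiring R] (s : Fin p) :
    Matrix (Fin N) (Fin N) (MvPolynomial (Fin p × Fin N × Fin N) R) :=
  Matrix.of fun k l => X (s, k, l)

theorem map_adDer_slotMatrix (Y : Matrix (Fin N) (Fin N) F) (s : Fin p) :
    (slotMatrix s).map (adDer F p N Y) =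
      Yᵀ.map C * slotMatrix s - slotMatrix s * Yᵀ.map C := by
  ext k l
  simp [slotMatrix, adDer_X, Matrix.mul_apply]

theorem neck_eq_trace_prod_slotMatrix (n : ℕ) (hn : 0 < n + 1) (μ : ℕ → Fin p) :
    neck F p N (n + 1) hn μ = (List.ofFn fun m : Fin (n + 1) => slotMatrix (μ m)).prod.trace := by
  rw [Matrix.trace_list_ofFn_prod]
  refine Finset.sum_congr rfl fun i _ => Finset.prod_congr rfl fun m _ => ?_
  have wrap : (⟨(m.val + 1) % (n + 1), Nat.mod_lt _ hn⟩ : Fin (n + 1)) = m + 1 := by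
    ext
    simp [Fin.val_add]
  rw [wrap]
  rfl

theorem necklace_invariant_general (F : Type) [Field F] (p N n : ℕ)
    (hn : 0 < n) (μ : ℕ → Fin p) (Y : Matrix (Fin N) (Fin N) F) :
    adDer F p N Y (neck F p N n hn μ) = 0 := by
  obtain ⟨n, rfl⟩ := Nat.exists_eq_add_one_of_ne_zero hn.ne'
  rw [neck_eq_trace_prod_slotMatrix]
  refine (adDer F p N Y).apply_trace_list_prod_eq_zero (Z := Yᵀ.map C) fun M hM => ?_
  obtain ⟨m, rfl⟩ := List.mem_ofFn.1 hM
  exact map_adDer_slotMatrix Y (μ m)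

/-- Every necklace element is invariant under the diagonal adjoint action of `gl_N`. -/
theorem necklace_invariant (F : Type) [Field F] [CharZero F] (p N n : ℕ) (hp : 0 < p)
    (hn : 0 < n) (μ : ℕ → Fin p) (Y : Matrix (Fin N) (Fin N) F) :
    adDer F p N Y (neck F p N n hn μ) = 0 :=
  necklace_invariant_general F p N n hn μ Y
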